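/- For every ρ ∈ ℂ with |ρ| = 1, every root k ∈ ℂ of the quadratic 2X² + (1 + ρ)X + 2ρ satisfies |k| = 1; conversely, for every k ∈ ℂ with |k| = 1 there exists ρ ∈ ℂ with |ρ| = 1 such that 2k² + (1 + ρ)k + 2ρ = 0. -/

import Mathlib

open Complex

/-! The identity `‖z + 2‖² - ‖2z + 1‖² = 3 (1 - ‖z‖²)` says that `z ↦ (2z + 1)/(z + 2)` maps the
unit circle to itself and nothing else to it. Solving the quadratic for `ρ` gives
`ρ (k + 2) = -k (2k + 1)`, so `|ρ| = 1` is equivalent to `|k + 2| = |k| |2k + 1|`, and both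
directions follow from the identity. -/

lemma sq_norm_mul_add_sub_sq_norm_mul_add (a b : ℝ) (z : ℂ) :
    ‖a * z + b‖ ^ 2 - ‖b * z + a‖ ^ 2 = (a ^ 2 - b ^ 2) * (‖z‖ ^ 2 - 1) := by
  simp only [Complex.sq_norm, normSq_apply, add_re, add_im, mul_re, mul_im, ofReal_re, ofReal_im]
  ring

lemma sq_norm_add_two (z : ℂ) : ‖z + 2‖ ^ 2 = ‖2 * z + 1‖ ^ 2 + 3 * (1 - ‖z‖ ^ 2) := by
  have h := sq_norm_mul_add_sub_sq_norm_mul_add 1 2 z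
  push_cast at h
  rw [one_mul] at h
  linear_combination h

lemma norm_two_mul_add_one_eq_norm_add_two {z : ℂ} (hz : ‖z‖ = 1) :
    ‖2 * z + 1‖ = ‖z + 2‖ := by
  have h := sq_norm_add_two z
  rw [hz] at h
  exact (pow_left_inj₀ (norm_nonneg _) (norm_nonneg _) two_ne_zero).1 (by linarith)

lemma norm_eq_one_of_norm_mul_norm_two_mul_add_one {z : ℂ}
    (h : ‖z‖ * ‖2 * z + 1‖ = ‖z + 2‖) : ‖z‖ = 1 := by
  have hsq : (‖z‖ ^ 2 - 1) * (‖2 * z + 1‖ ^ 2 + 3) = 0 := by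
    linear_combination congrArg (· ^ 2) h + sq_norm_add_two z
  have hpos : ‖2 * z + 1‖ ^ 2 + 3 ≠ 0 := by positivity
  have hz : ‖z‖ ^ 2 = 1 := by linarith [(mul_eq_zero.1 hsq).resolve_right hpos]
  exact (pow_eq_one_iff_of_nonneg (norm_nonneg z) two_ne_zero).1 hz

lemma quadratic_eq_zero_iff_mul_add_two {ρ k : ℂ} :
    2 * k ^ 2 + (1 + ρ) * k + 2 * ρ = 0 ↔ ρ * (k + 2) = -(k * (2 * k + 1)) := by
  constructor <;> intro h <;> linear_combination h

lemma add_two_ne_zero_of_norm_eq_one {k : ℂ} (hk : ‖k‖ = 1) : k + 2 ≠ 0 := by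
  intro h
  rw [eq_neg_of_add_eq_zero_left h] at hk
  norm_num at hk

theorem quadratic_roots_on_unit_circle :
    (∀ ρ : ℂ, ‖ρ‖ = 1 →
      ∀ k : ℂ, 2 * k ^ 2 + (1 + ρ) * k + 2 * ρ = 0 → ‖k‖ = 1) ∧
    (∀ k : ℂ, ‖k‖ = 1 →
      ∃ ρ : ℂ, ‖ρ‖ = 1 ∧ 2 * k ^ 2 + (1 + ρ) * k + 2 * ρ = 0) := by
  constructor
  · intro ρ hρ k hk
    have h := congrArg norm (quadratic_eq_zero_iff_mul_add_two.1 hk)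
    rw [norm_mul, norm_neg, norm_mul, hρ, one_mul] at h
    exact norm_eq_one_of_norm_mul_norm_two_mul_add_one h.symm
  · intro k hk
    have hk2 := add_two_ne_zero_of_norm_eq_one hk
    refine ⟨-(k * (2 * k + 1)) / (k + 2), ?_, ?_⟩
    · rw [norm_div, norm_neg, norm_mul, hk, one_mul, norm_two_mul_add_one_eq_norm_add_two hk,
        div_self (norm_ne_zero_iff.2 hk2)]
    · exact quadratic_eq_zero_iff_mul_add_two.2 (div_mul_cancel₀ _ hk2)
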